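/- For every x ∈ ℝ and t ∈ [0,T), one has the explicit formula ∂_x m₁^{(1)}(x,t) = (1/(πi)) ∫₁^∞ e^{-(T-t)y²/4} e^{-t/(4y²)} · ((y + 1/y)/2) · Re[ e^{-i(x-x₀)y/2} e^{-ix/(2y)} f₁(i/y) (ω + ω²/y²) ] dy. -/

import Mathlib

open MeasureTheory Filter Topology

noncomputable section

namespace Paper

/-- Iterated logarithm: `iterLog r` is the `r`-th iterate of `Real.log`. -/
def iterLog : ℕ → ℝ → ℝ
  | 0, s => s
  | r + 1, s => Real.log (iterLog r s)

/-- `LOG(s; r⃗, a⃗, σ) = (-1)^σ ∏_j (log_{r_j} s)^{a_j}` (empty product convention for `p = 0`). -/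
def LOG {p : ℕ} (r : Fin p → ℕ) (a : Fin p → ℝ) (σ : ℕ) (s : ℝ) : ℝ :=
  (-1 : ℝ) ^ σ * ∏ j : Fin p, iterLog (r j) s ^ a j

/-- `f(t) ≍ g(t)` as `t → T⁻`: there are `T₀ ∈ (0,T)` and `c₁, c₂ > 0` with
`c₁ g(t) ≤ f(t) ≤ c₂ g(t)` for all `t ∈ [T₀, T)`. -/
def AsympTo (T : ℝ) (f g : ℝ → ℝ) : Prop :=
  ∃ T₀ ∈ Set.Ioo (0 : ℝ) T, ∃ c₁ > (0 : ℝ), ∃ c₂ > (0 : ℝ),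
    ∀ t ∈ Set.Ico T₀ T, c₁ * g t ≤ f t ∧ f t ≤ c₂ * g t

/-- Partial derivative in `x`. -/
def px (u : ℝ → ℝ → ℝ) : ℝ → ℝ → ℝ := fun x t => deriv (fun x' => u x' t) x

/-- Partial derivative in `t`. -/
def pt (u : ℝ → ℝ → ℝ) : ℝ → ℝ → ℝ := fun x t => deriv (fun t' => u x t') t

/-- Mixed partial derivative `∂_x^{q₁} ∂_t^{q₂}` for real-valued functions. -/
def pdR (q₁ q₂ : ℕ) (u : ℝ → ℝ → ℝ) : ℝ → ℝ → ℝ :=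
  fun x t => iteratedDeriv q₁ (fun x' => iteratedDeriv q₂ (fun t' => u x' t') t) x

/-- Mixed partial derivative `∂_x^{q₁} ∂_t^{q₂}` for complex-valued functions. -/
def pdC (q₁ q₂ : ℕ) (g : ℝ → ℝ → ℂ) : ℝ → ℝ → ℂ :=
  fun x t => iteratedDeriv q₁ (fun x' => iteratedDeriv q₂ (fun t' => g x' t') t) x

/-- Schwartz class solution of the "bad" Boussinesq equation
`u_tt = u_xx + (u²)_xx + u_xxxx` on `ℝ × [0,T)`. -/
def IsSchwartzSolution (T : ℝ) (u : ℝ → ℝ → ℝ) : Prop :=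
  ContDiffOn ℝ (⊤ : ℕ∞) (fun q : ℝ × ℝ => u q.1 q.2) (Set.univ ×ˢ Set.Ico 0 T) ∧
  (∀ x : ℝ, ∀ t ∈ Set.Ico (0 : ℝ) T,
      pt (pt u) x t =
        px (px u) x t + px (px fun x' t' => u x' t' ^ 2) x t + px (px (px (px u))) x t) ∧
  (∀ N : ℕ, 1 ≤ N → ∀ τ ∈ Set.Ico (0 : ℝ) T, ∃ B : ℝ, ∀ x : ℝ, ∀ t ∈ Set.Icc (0 : ℝ) τ,
      ∑ i ∈ Finset.range (N + 1), (1 + |x|) ^ N * |iteratedDeriv i (fun x' => u x' t) x| ≤ B)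

/-- `ω = e^{2πi/3}`. -/
def ω : ℂ := Complex.exp (2 * Real.pi * Complex.I / 3)

/-- `e₁ = e^{-iπ/6}`. -/
def e₁ : ℂ := Complex.exp (-(Real.pi / 6) * Complex.I)

/-- `e₂ = e^{5iπ/6}`. -/
def e₂ : ℂ := Complex.exp (5 * Real.pi / 6 * Complex.I)

/-- `e₃ = e^{iπ/6}`. -/
def e₃ : ℂ := Complex.exp (Real.pi / 6 * Complex.I)

/-- `e₄ = e^{7iπ/6}`. -/
def e₄ : ℂ := Complex.exp (7 * Real.pi / 6 * Complex.I)

/-- Contour integral over `Γ̃ = {r e^{-iπ/6} : r > 1} ∪ {r e^{5iπ/6} : r > 1}`,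
each ray oriented in the direction of increasing modulus. -/
def contourInt (g : ℂ → ℂ) : ℂ :=
  (∫ r in Set.Ioi (1 : ℝ), g ((r : ℂ) * e₁)) * e₁ +
  (∫ r in Set.Ioi (1 : ℝ), g ((r : ℂ) * e₂)) * e₂

/-- The contour `Γ̃` as a set. -/
def Gammat : Set ℂ :=
  {k : ℂ | ∃ r : ℝ, 1 < r ∧ k = (r : ℂ) * e₁} ∪ {k : ℂ | ∃ r : ℝ, 1 < r ∧ k = (r : ℂ) * e₂}

/-- `Γ̃_m = Γ̃ ∩ {k : |k| > 2}`. -/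
def GammatM : Set ℂ := Gammat ∩ {k : ℂ | 2 < ‖k‖}

/-- The set `S`: the closure of
`{r e^{iπ/6} : r > 1} ∪ {r e^{7iπ/6} : r > 1} ∪ {r e^{5iπ/6} : 0 < r < 1} ∪ {r e^{-iπ/6} : 0 < r < 1}`. -/
def Sset : Set ℂ :=
  closure ({k : ℂ | ∃ r : ℝ, 1 < r ∧ k = (r : ℂ) * e₃} ∪
    {k : ℂ | ∃ r : ℝ, 1 < r ∧ k = (r : ℂ) * e₄} ∪
    {k : ℂ | ∃ r : ℝ, 0 < r ∧ r < 1 ∧ k = (r : ℂ) * e₂} ∪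
    {k : ℂ | ∃ r : ℝ, 0 < r ∧ r < 1 ∧ k = (r : ℂ) * e₁})

/-- `r̃(k) = (ω² - k²)/(1 - ω²k²)`. -/
def rtilde (k : ℂ) : ℂ := (ω ^ 2 - k ^ 2) / (1 - ω ^ 2 * k ^ 2)

/-- `f̃₀`: equals `f₂(k) = r̃(k) conj(f₁(1/conj k))` on the upper ray `(i, i∞)`
and `f₁(1/k)` on the lower ray `(-i, -i∞)`. -/
def ftilde0 (f₁ : ℂ → ℂ) (k : ℂ) : ℂ :=
  if 0 < k.im then rtilde k * starRingEnd ℂ (f₁ (1 / starRingEnd ℂ k)) else f₁ (1 / k)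

/-- The kernel `F(x,t,k,k₁)`. -/
def Fker (x₀ T : ℝ) (f₁ : ℂ → ℂ) (x t : ℝ) (k k₁ : ℂ) : ℂ :=
  Complex.exp (((x - x₀ : ℝ) : ℂ) / 2 * (ω * k₁)) *
  Complex.exp (((T - t : ℝ) : ℂ) / 4 * (ω * k₁) ^ 2) *
  (ω ^ 2 / (ω ^ 2 * k₁ - k) - ω / k₁ ^ 2 / (1 / (ω ^ 2 * k₁) - k)) *
  (ftilde0 f₁ (ω * k₁) *
    Complex.exp (-((x : ℂ) / 2) * (1 / (ω * k₁)) + (t : ℂ) / 4 * (1 / (ω * k₁)) ^ 2) /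
    (2 * (Real.pi : ℂ) * Complex.I))

/-- Iterated kernels: `mSeq F j` is `m_j`, with `mSeq F 0 ≡ 1` and
`m_{j+1}(k) = ∫_{Γ̃} F(k,k₁) m_j(k₁) dk₁`. -/
def mSeq (F : ℂ → ℂ → ℂ) : ℕ → ℂ → ℂ
  | 0 => fun _ => 1
  | j + 1 => fun k => contourInt fun k₁ => F k k₁ * mSeq F j k₁

/-- `m(x,t,k) = 1 + Σ_{j=1}^∞ m_j(x,t,k)`. -/
def mFun (x₀ T : ℝ) (f₁ : ℂ → ℂ) (x t : ℝ) (k : ℂ) : ℂ :=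
  1 + ∑' j : ℕ, mSeq (Fker x₀ T f₁ x t) (j + 1) k

/-- `F^{(1)}(x,t,k₁)`. -/
def F1ker (x₀ T : ℝ) (f₁ : ℂ → ℂ) (x t : ℝ) (k₁ : ℂ) : ℂ :=
  -(Complex.exp (((x - x₀ : ℝ) : ℂ) / 2 * (ω * k₁)) *
    Complex.exp (((T - t : ℝ) : ℂ) / 4 * (ω * k₁) ^ 2) *
    Complex.exp (-((x : ℂ) / 2) * (1 / (ω * k₁)) + (t : ℂ) / 4 * (1 / (ω * k₁)) ^ 2) *
    (ftilde0 f₁ (ω * k₁) / (2 * (Real.pi : ℂ) * Complex.I)) * (ω ^ 2 - ω / k₁ ^ 2))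

/-- `m1Seq x₀ T f₁ x t j = m_{j+1}^{(1)}(x,t)`, i.e. `m_j^{(1)} = m1Seq … (j-1)` for `j ≥ 1`. -/
def m1Seq (x₀ T : ℝ) (f₁ : ℂ → ℂ) (x t : ℝ) (j : ℕ) : ℂ :=
  contourInt fun k₁ => F1ker x₀ T f₁ x t k₁ * mSeq (Fker x₀ T f₁ x t) j k₁

end Paper

open Paper

/-!
On the two rays of `Γ̃` one has `ωk₁ = ± i r`, where `f̃₀(ωk₁)` is `f₁(i/r)` on one ray and
`r̃ · conj f₁(i/r)` on the other. After this substitution the ray through `e^{-iπ/6}` contributes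
minus the complex conjugate of what the ray through `e^{5iπ/6}` contributes, so
`m₁^{(1)} = J - conj J` with `J(x) = ∫₁^∞ ρ(x, r) dr`. In `x` the density `ρ` is a pure phase
`exp (-i x (r + 1/r) / 2)` times an `x`-independent factor, and the Gaussian `e^{-(T-t) r²/4}`
gives `r |ρ| ≤ C |f₁(i/r)| / r`, which is integrable. So `J` may be differentiated under the
integral sign, and as `∂ₓρ = -i (r + 1/r)/2 · ρ`, `J' - conj J'` integrates `-i (r + 1/r) Re ρ`.
-/

open Complex in
theorem hasDerivAt_integral_mul_cexp_ofReal_mul {α : Type*} [MeasurableSpace α] {μ : Measure α}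
    {c a : α → ℂ} (ha_re : ∀ r, (a r).re = 0) (ha : AEStronglyMeasurable a μ)
    (hc : Integrable c μ) (hac : Integrable (fun r => a r * c r) μ) (x : ℝ) :
    HasDerivAt (fun y : ℝ => ∫ r, c r * exp (y * a r) ∂μ)
      (∫ r, a r * c r * exp (x * a r) ∂μ) x := by
  have hexp : ∀ (y : ℝ) r, ‖exp (y * a r)‖ = 1 := fun y r => by
    rw [norm_exp, re_ofReal_mul, ha_re, mul_zero, Real.exp_zero]
  have hmeas : ∀ y : ℝ, AEStronglyMeasurable (fun r => exp (y * a r)) μ := fun y =>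
    continuous_exp.comp_aestronglyMeasurable (ha.const_mul _)
  refine (hasDerivAt_integral_of_dominated_loc_of_deriv_le
    (F := fun (y : ℝ) r => c r * exp (y * a r)) (F' := fun y r => a r * c r * exp (y * a r))
    (bound := fun r => ‖a r * c r‖)
    Filter.univ_mem (.of_forall fun y => hc.aestronglyMeasurable.mul (hmeas y))
    (hc.mono (hc.aestronglyMeasurable.mul (hmeas x)) (.of_forall fun r => ?_))
    (hac.aestronglyMeasurable.mul (hmeas x)) (.of_forall fun r y _ => ?_)
    hac.norm (.of_forall fun r y _ => ?_)).2
  · simp only [norm_mul, hexp, mul_one, le_refl]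
  · rw [norm_mul, hexp, mul_one]
  · have := (((hasDerivAt_id (y : ℝ)).ofReal_comp.mul_const (a r)).cexp).const_mul (c r)
    exact this.congr_deriv (by simp only [id, ofReal_one, one_mul]; ring)

lemma mul_exp_neg_mul_sq_le {s r : ℝ} (hs : 0 < s) (hr : 0 < r) :
    r * Real.exp (-(s * r ^ 2)) ≤ (s * r)⁻¹ := by
  have h := Real.add_one_le_exp (s * r ^ 2)
  rw [Real.exp_neg, ← div_eq_mul_inv, div_le_iff₀ (Real.exp_pos _), inv_mul_eq_div,
    le_div_iff₀ (by positivity)]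
  nlinarith

namespace Paper
open Complex ComplexConjugate
open scoped Real

lemma omega_ne_zero : ω ≠ 0 := exp_ne_zero _

lemma omega_pow_three : ω ^ 3 = 1 := by
  rw [ω, ← exp_nat_mul]
  convert exp_two_pi_mul_I using 2
  push_cast; ring

lemma conj_omega : conj ω = ω ^ 2 := by
  rw [ω, ← exp_conj, ← exp_nat_mul]
  simp only [map_div₀, map_mul, conj_I, conj_ofReal, map_ofNat]
  rw [show ((2 : ℕ) : ℂ) * (2 * π * I / 3) = 2 * π * I + 2 * π * -I / 3 by push_cast; ring,
    exp_add, exp_two_pi_mul_I, one_mul]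

lemma one_add_omega_sq_mul_ne_zero {s : ℝ} (hs : 0 ≤ s) : 1 + ω ^ 2 * s ≠ 0 := by
  intro h
  have hω : ω = ((-s : ℝ) : ℂ) := by
    push_cast; linear_combination ω * h - s * omega_pow_three
  have h3 : (-s) ^ 3 = (1 : ℝ) := by exact_mod_cast hω ▸ omega_pow_three
  nlinarith [pow_nonneg hs 3]

lemma e₁_eq : e₁ = I * ω ^ 2 := by
  have h : e₁ = exp (π / 2 * I) * exp ((2 : ℕ) * (2 * π * I / 3)) * (exp (2 * π * I))⁻¹ := by
    rw [e₁, ← exp_neg, ← exp_add, ← exp_add]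
    congr 1
    push_cast; ring
  rw [h, exp_pi_div_two_mul_I, exp_nat_mul, exp_two_pi_mul_I, inv_one, mul_one, ω]

lemma e₂_eq : e₂ = -e₁ := by
  rw [e₂, e₁, show 5 * (π : ℂ) / 6 * I = π * I + -(π / 6) * I by ring, exp_add, exp_pi_mul_I]
  ring

lemma omega_mul_e₁ (r : ℝ) : ω * (r * e₁) = r * I := by
  rw [e₁_eq]; linear_combination ((r : ℂ) * I) * omega_pow_three

lemma omega_mul_e₂ (r : ℝ) : ω * (r * e₂) = -(r * I) := by
  rw [e₂_eq, e₁_eq]; linear_combination (-(r : ℂ) * I) * omega_pow_three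

lemma sq_ofReal_mul_e₁ (r : ℝ) : ((r : ℂ) * e₁) ^ 2 = -r ^ 2 * ω := by
  rw [e₁_eq]; linear_combination (r : ℂ) ^ 2 * ω ^ 4 * I_sq - (r : ℂ) ^ 2 * ω * omega_pow_three

lemma sq_ofReal_mul_e₂ (r : ℝ) : ((r : ℂ) * e₂) ^ 2 = -r ^ 2 * ω := by
  rw [e₂_eq, mul_neg, neg_sq, sq_ofReal_mul_e₁]

def rayDamping (T t r : ℝ) : ℝ := Real.exp (-(T - t) * r ^ 2 / 4) * Real.exp (-(t / (4 * r ^ 2)))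

def rayAmplitude (x₀ : ℝ) (f₁ : ℂ → ℂ) (x r : ℝ) : ℂ :=
  exp (-(((x - x₀ : ℝ) : ℂ) / 2) * (I * r)) * exp (-((x : ℂ) / 2) * (I / r)) *
    f₁ (I / r) * (ω + ω ^ 2 / (r : ℂ) ^ 2)

def rayDensity (x₀ T : ℝ) (f₁ : ℂ → ℂ) (t x r : ℝ) : ℂ :=
  (rayDamping T t r / (2 * π) : ℝ) * rayAmplitude x₀ f₁ x r

def rayIntegral (x₀ T : ℝ) (f₁ : ℂ → ℂ) (t x : ℝ) : ℂ :=
  ∫ r in Set.Ioi 1, rayDensity x₀ T f₁ t x r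

def rayFreq (r : ℝ) : ℂ := -(I * ((r + 1 / r) / 2 : ℝ))

lemma F1ker_mul_e₁ (x₀ T : ℝ) (f₁ : ℂ → ℂ) (x t : ℝ) {r : ℝ} (hr : 0 < r) :
    F1ker x₀ T f₁ x t (r * e₁) * e₁ = -conj (rayDensity x₀ T f₁ t x r) := by
  have hr0 : (r : ℂ) ≠ 0 := ofReal_ne_zero.2 hr.ne'
  have hd : 1 + ω ^ 2 * ((r ^ 2 : ℝ) : ℂ) ≠ 0 := one_add_omega_sq_mul_ne_zero (sq_nonneg r)
  push_cast at hd
  rw [mul_comm] at hd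
  have hf : ftilde0 f₁ (r * I) = (ω ^ 2 + r ^ 2) / (1 + ω ^ 2 * r ^ 2) * conj (f₁ (I / r)) := by
    rw [ftilde0, if_pos (by simpa using hr), rtilde, mul_pow, I_sq, map_mul, conj_ofReal, conj_I]
    congr 3
    · ring
    · ring
    · field_simp; rw [I_sq]
  have hsq : ω ^ 2 - ω / (r * e₁) ^ 2 = ω ^ 2 + 1 / (r : ℂ) ^ 2 := by
    rw [sq_ofReal_mul_e₁]
    field_simp [omega_ne_zero]
    ring
  rw [F1ker, omega_mul_e₁, hf, hsq, rayDensity, rayDamping, rayAmplitude]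
  simp only [map_mul, map_div₀, map_add, map_neg, map_pow, conj_ofReal, ← exp_conj,
    conj_omega, conj_I, map_ofNat]
  push_cast
  simp only [← exp_add]
  have hexp : ((x : ℂ) - x₀) / 2 * (r * I) + ((T : ℂ) - t) / 4 * (r * I) ^ 2 +
      (-(x / 2) * (1 / (r * I)) + t / 4 * (1 / (r * I)) ^ 2) =
      -((T : ℂ) - t) * r ^ 2 / 4 + -(t / (4 * r ^ 2)) +
        (-((x - x₀) / 2) * (-I * r) + -(x / 2) * (-I / r)) := by
    rw [show 1 / ((r : ℂ) * I) = -I / r by field_simp; rw [I_sq, neg_neg],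
      show ((r : ℂ) * I) ^ 2 = -r ^ 2 by rw [mul_pow, I_sq, mul_neg_one], div_pow, neg_sq, I_sq]
    ring
  rw [hexp, exp_add, e₁_eq]
  field_simp
  ring

lemma F1ker_mul_e₂ (x₀ T : ℝ) (f₁ : ℂ → ℂ) (x t : ℝ) {r : ℝ} (hr : 0 < r) :
    F1ker x₀ T f₁ x t (r * e₂) * e₂ = rayDensity x₀ T f₁ t x r := by
  have hr0 : (r : ℂ) ≠ 0 := ofReal_ne_zero.2 hr.ne'
  have hf : ftilde0 f₁ (-(r * I)) = f₁ (I / r) := by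
    rw [ftilde0, if_neg (by simpa using hr.le)]
    congr 1
    field_simp
    rw [I_sq]
  have hsq : ω ^ 2 - ω / (r * e₂) ^ 2 = ω ^ 2 + 1 / (r : ℂ) ^ 2 := by
    rw [sq_ofReal_mul_e₂]
    field_simp [omega_ne_zero]
    ring
  rw [F1ker, omega_mul_e₂, hf, hsq, rayDensity, rayDamping, rayAmplitude]
  push_cast
  simp only [← exp_add]
  have hexp : ((x : ℂ) - x₀) / 2 * -(r * I) + ((T : ℂ) - t) / 4 * (-(r * I)) ^ 2 +
      (-(x / 2) * (1 / -(r * I)) + t / 4 * (1 / -(r * I)) ^ 2) =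
      -((T : ℂ) - t) * r ^ 2 / 4 + -(t / (4 * r ^ 2)) +
        (-((x - x₀) / 2) * (I * r) + -(x / 2) * (I / r)) := by
    rw [show 1 / -((r : ℂ) * I) = I / r by field_simp; rw [I_sq],
      show (-((r : ℂ) * I)) ^ 2 = -r ^ 2 by rw [neg_sq, mul_pow, I_sq, mul_neg_one], div_pow, I_sq]
    ring
  rw [hexp, exp_add, e₂_eq, e₁_eq]
  field_simp
  linear_combination f₁ (I / r) * r ^ 2 * ω * omega_pow_three

lemma m1Seq_zero_eq (x₀ T : ℝ) (f₁ : ℂ → ℂ) (x t : ℝ) :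
    m1Seq x₀ T f₁ x t 0 = rayIntegral x₀ T f₁ t x - conj (rayIntegral x₀ T f₁ t x) := by
  have h₁ : ∫ r in Set.Ioi (1 : ℝ), F1ker x₀ T f₁ x t (r * e₁) * e₁ =
      ∫ r in Set.Ioi (1 : ℝ), -conj (rayDensity x₀ T f₁ t x r) :=
    setIntegral_congr_fun measurableSet_Ioi fun r hr => F1ker_mul_e₁ x₀ T f₁ x t (one_pos.trans hr)
  have h₂ : ∫ r in Set.Ioi (1 : ℝ), F1ker x₀ T f₁ x t (r * e₂) * e₂ =
      ∫ r in Set.Ioi (1 : ℝ), rayDensity x₀ T f₁ t x r :=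
    setIntegral_congr_fun measurableSet_Ioi fun r hr => F1ker_mul_e₂ x₀ T f₁ x t (one_pos.trans hr)
  simp only [m1Seq, contourInt, mSeq, mul_one, ← integral_mul_const, h₁, h₂, integral_neg,
    integral_conj, rayIntegral]
  ring

lemma rayDensity_eq_mul_cexp (x₀ T : ℝ) (f₁ : ℂ → ℂ) (t x : ℝ) {r : ℝ} (hr : r ≠ 0) :
    rayDensity x₀ T f₁ t x r = rayDensity x₀ T f₁ t 0 r * exp (x * rayFreq r) := by
  have hr0 : (r : ℂ) ≠ 0 := ofReal_ne_zero.2 hr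
  have hexp : ∀ y : ℝ, exp (-(((y - x₀ : ℝ) : ℂ) / 2) * (I * r)) * exp (-((y : ℂ) / 2) * (I / r)) =
      exp (x₀ / 2 * (I * r)) * exp (y * rayFreq r) := fun y => by
    rw [rayFreq, ← exp_add, ← exp_add]
    congr 1
    push_cast
    field_simp
    ring
  simp only [rayDensity, rayAmplitude, hexp]
  simp only [ofReal_zero, zero_mul, exp_zero, mul_one]
  ring

lemma rayFreq_mul_rayDensity_sub_conj (x₀ T : ℝ) (f₁ : ℂ → ℂ) (t x r : ℝ) :
    rayFreq r * rayDensity x₀ T f₁ t x r -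
        conj (rayFreq r * rayDensity x₀ T f₁ t x r) =
      1 / (π * I) * (rayDamping T t r * ((r + 1 / r) / 2) * (rayAmplitude x₀ f₁ x r).re : ℝ) := by
  have hπ : (π : ℂ) ≠ 0 := ofReal_ne_zero.2 Real.pi_ne_zero
  rw [rayFreq, rayDensity, ofReal_mul, ofReal_mul, re_eq_add_conj]
  simp only [map_mul, map_neg, conj_I, conj_ofReal]
  push_cast
  field_simp
  linear_combination -((r : ℂ) ^ 2 + 1) * rayDamping T t r *
    (rayAmplitude x₀ f₁ x r + conj (rayAmplitude x₀ f₁ x r)) * (r : ℂ)⁻¹ * I_sq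

lemma continuousOn_f₁_I_div {f₁ : ℂ → ℂ}
    (hf : ContinuousOn (fun y : ℝ => f₁ (I * y)) (Set.Ioo 0 1)) :
    ContinuousOn (fun r : ℝ => f₁ (I / r)) (Set.Ioi 1) := by
  have hmaps : Set.MapsTo (fun r : ℝ => r⁻¹) (Set.Ioi 1) (Set.Ioo 0 1) := fun r hr =>
    ⟨inv_pos.2 (one_pos.trans hr), inv_lt_one_of_one_lt₀ hr⟩
  have hinv : ContinuousOn (fun r : ℝ => r⁻¹) (Set.Ioi 1) :=
    continuousOn_inv₀.mono fun r hr => (one_pos.trans hr).ne'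
  refine (hf.comp hinv hmaps).congr fun r _ => ?_
  simp [div_eq_mul_inv]

lemma continuousOn_rayDensity (x₀ T : ℝ) {f₁ : ℂ → ℂ}
    (hf : ContinuousOn (fun y : ℝ => f₁ (I * y)) (Set.Ioo 0 1))
    (t x : ℝ) : ContinuousOn (rayDensity x₀ T f₁ t x) (Set.Ioi 1) := by
  have hr : ∀ r ∈ Set.Ioi (1 : ℝ), (r : ℂ) ≠ 0 := fun r h => ofReal_ne_zero.2 (one_pos.trans h).ne'
  have hcast : ContinuousOn (fun r : ℝ => (r : ℂ)) (Set.Ioi 1) := continuous_ofReal.continuousOn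
  have hdamp : ContinuousOn (fun r : ℝ => ((rayDamping T t r / (2 * π) : ℝ) : ℂ)) (Set.Ioi 1) :=
    continuous_ofReal.comp_continuousOn (by unfold rayDamping; fun_prop (disch := simp_all))
  exact hdamp.mul (((by fun_prop (disch := simp_all) : ContinuousOn _ _).mul
    (continuousOn_f₁_I_div hf)).mul (by fun_prop (disch := simp_all)))

lemma continuousOn_rayFreq : ContinuousOn rayFreq (Set.Ioi 1) := by
  have hr : ∀ r ∈ Set.Ioi (1 : ℝ), r ≠ 0 := fun r h => (one_pos.trans h).ne'
  have : ContinuousOn (fun r : ℝ => (((r + 1 / r) / 2 : ℝ) : ℂ)) (Set.Ioi 1) :=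
    continuous_ofReal.comp_continuousOn (by fun_prop (disch := simp_all))
  exact (continuousOn_const.mul this).neg

lemma rayDamping_le (T : ℝ) {t : ℝ} (ht : 0 ≤ t) (r : ℝ) :
    rayDamping T t r ≤ Real.exp (-((T - t) / 4 * r ^ 2)) := by
  rw [rayDamping]
  calc _ ≤ Real.exp (-(T - t) * r ^ 2 / 4) * 1 := by
        gcongr; exact Real.exp_le_one_iff.2 (by rw [neg_nonpos]; positivity)
    _ = _ := by rw [mul_one]; ring_nf

lemma norm_rayAmplitude_le (x₀ : ℝ) (f₁ : ℂ → ℂ) (x : ℝ) {r : ℝ} (hr : 1 ≤ r) :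
    ‖rayAmplitude x₀ f₁ x r‖ ≤ 2 * ‖f₁ (I / r)‖ := by
  have hω : ‖ω + ω ^ 2 / (r : ℂ) ^ 2‖ ≤ 2 := by
    have hω1 : ‖ω‖ = 1 := by rw [ω, norm_exp]; simp
    calc ‖ω + ω ^ 2 / (r : ℂ) ^ 2‖ ≤ ‖ω‖ + ‖ω‖ ^ 2 / r ^ 2 := by
          grw [norm_add_le]; simp [norm_pow, abs_of_pos (one_pos.trans_le hr)]
      _ ≤ 2 := by
          rw [hω1]
          have : 1 / r ^ 2 ≤ 1 := by rw [div_le_one (by positivity)]; nlinarith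
          linarith
  rw [rayAmplitude, norm_mul, norm_mul, norm_mul, norm_exp, norm_exp]
  simp only [ofReal_sub, neg_mul, neg_re, mul_re, div_ofNat_re, sub_re, ofReal_re, I_re, zero_mul,
    I_im, ofReal_im, mul_zero, sub_self, div_ofNat_im, sub_im, zero_div, mul_im, one_mul, zero_add,
    neg_zero, Real.exp_zero, div_ofReal_re, div_ofReal_im]
  rw [mul_comm]
  gcongr

lemma norm_rayFreq_le {r : ℝ} (hr : 1 ≤ r) : ‖rayFreq r‖ ≤ r := by
  have hr0 : 0 < r := one_pos.trans_le hr
  rw [rayFreq, norm_neg, norm_mul, norm_I, one_mul, norm_real,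
    Real.norm_of_nonneg (by positivity)]
  have : 1 / r ≤ r := (div_le_one hr0 |>.2 hr).trans hr
  linarith

lemma mul_norm_rayDensity_le (x₀ : ℝ) {T t : ℝ} (f₁ : ℂ → ℂ) (ht : 0 ≤ t) (htT : t < T) (x : ℝ)
    {r : ℝ} (hr : 1 ≤ r) :
    r * ‖rayDensity x₀ T f₁ t x r‖ ≤ 4 / ((T - t) * π) * (‖f₁ (I / r)‖ / r) := by
  have hr0 : 0 < r := one_pos.trans_le hr
  have hs : 0 < (T - t) / 4 := by linarith
  have hdamp : 0 ≤ rayDamping T t r / (2 * π) := by unfold rayDamping; positivity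
  calc r * ‖rayDensity x₀ T f₁ t x r‖
      = r * (rayDamping T t r / (2 * π)) * ‖rayAmplitude x₀ f₁ x r‖ := by
        rw [rayDensity, norm_mul, norm_real, Real.norm_of_nonneg hdamp, mul_assoc]
    _ ≤ r * (Real.exp (-((T - t) / 4 * r ^ 2)) / (2 * π)) * (2 * ‖f₁ (I / r)‖) := by
        gcongr
        · exact rayDamping_le T ht r
        · exact norm_rayAmplitude_le x₀ f₁ x hr
    _ = r * Real.exp (-((T - t) / 4 * r ^ 2)) * (‖f₁ (I / r)‖ / π) := by ring
    _ ≤ ((T - t) / 4 * r)⁻¹ * (‖f₁ (I / r)‖ / π) := by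
        gcongr
        exact mul_exp_neg_mul_sq_le hs hr0
    _ = 4 / ((T - t) * π) * (‖f₁ (I / r)‖ / r) := by
        field_simp

lemma integrableOn_of_norm_le_mul_norm_rayDensity (x₀ : ℝ) {T t : ℝ} {f₁ : ℂ → ℂ}
    (hL1 : IntegrableOn (fun y : ℝ => ‖f₁ (I / (y : ℂ))‖ / y) (Set.Ioi 1))
    (ht : 0 ≤ t) (htT : t < T) (x : ℝ) {g : ℝ → ℂ} (hg : ContinuousOn g (Set.Ioi 1))
    (hle : ∀ r : ℝ, 1 < r → ‖g r‖ ≤ r * ‖rayDensity x₀ T f₁ t x r‖) :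
    IntegrableOn g (Set.Ioi 1) :=
  (hL1.const_mul (4 / ((T - t) * π))).mono' (hg.aestronglyMeasurable measurableSet_Ioi)
    ((ae_restrict_iff' measurableSet_Ioi).2 (.of_forall fun r hr =>
      (hle r hr).trans (mul_norm_rayDensity_le x₀ f₁ ht htT x hr.le)))

lemma integrableOn_rayDensity (x₀ : ℝ) {T t : ℝ} {f₁ : ℂ → ℂ}
    (hf : ContinuousOn (fun y : ℝ => f₁ (I * y)) (Set.Ioo 0 1))
    (hL1 : IntegrableOn (fun y : ℝ => ‖f₁ (I / (y : ℂ))‖ / y) (Set.Ioi 1))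
    (ht : 0 ≤ t) (htT : t < T) (x : ℝ) : IntegrableOn (rayDensity x₀ T f₁ t x) (Set.Ioi 1) :=
  integrableOn_of_norm_le_mul_norm_rayDensity x₀ hL1 ht htT x
    (continuousOn_rayDensity x₀ T hf t x) fun _ hr =>
      le_mul_of_one_le_left (norm_nonneg _) hr.le

lemma integrableOn_rayFreq_mul_rayDensity (x₀ : ℝ) {T t : ℝ} {f₁ : ℂ → ℂ}
    (hf : ContinuousOn (fun y : ℝ => f₁ (I * y)) (Set.Ioo 0 1))
    (hL1 : IntegrableOn (fun y : ℝ => ‖f₁ (I / (y : ℂ))‖ / y) (Set.Ioi 1))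
    (ht : 0 ≤ t) (htT : t < T) (x : ℝ) :
    IntegrableOn (fun r => rayFreq r * rayDensity x₀ T f₁ t x r) (Set.Ioi 1) :=
  integrableOn_of_norm_le_mul_norm_rayDensity x₀ hL1 ht htT x
    (continuousOn_rayFreq.mul (continuousOn_rayDensity x₀ T hf t x)) fun r hr => by
      rw [norm_mul]; gcongr; exact norm_rayFreq_le hr.le

lemma hasDerivAt_rayIntegral (x₀ : ℝ) {T t : ℝ} {f₁ : ℂ → ℂ}
    (hf : ContinuousOn (fun y : ℝ => f₁ (I * y)) (Set.Ioo 0 1))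
    (hL1 : IntegrableOn (fun y : ℝ => ‖f₁ (I / (y : ℂ))‖ / y) (Set.Ioi 1))
    (ht : 0 ≤ t) (htT : t < T) (x : ℝ) :
    HasDerivAt (rayIntegral x₀ T f₁ t)
      (∫ r in Set.Ioi 1, rayFreq r * rayDensity x₀ T f₁ t x r) x := by
  have hre : ∀ r, (rayFreq r).re = 0 := fun r => by simp [rayFreq]
  have key := hasDerivAt_integral_mul_cexp_ofReal_mul hre
    (continuousOn_rayFreq.aestronglyMeasurable measurableSet_Ioi)
    (integrableOn_rayDensity x₀ hf hL1 ht htT 0)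
    (integrableOn_rayFreq_mul_rayDensity x₀ hf hL1 ht htT 0) x
  have hfun : rayIntegral x₀ T f₁ t =
      fun y : ℝ => ∫ r in Set.Ioi 1, rayDensity x₀ T f₁ t 0 r * exp (y * rayFreq r) :=
    funext fun y => setIntegral_congr_fun measurableSet_Ioi fun r hr =>
      rayDensity_eq_mul_cexp x₀ T f₁ t y (one_pos.trans hr).ne'
  rw [hfun]
  convert key using 1
  refine setIntegral_congr_fun measurableSet_Ioi fun r hr => ?_
  rw [rayDensity_eq_mul_cexp x₀ T f₁ t x (one_pos.trans hr).ne']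
  ring

end Paper

theorem statement_12_general (x₀ T : ℝ) (f₁ : ℂ → ℂ)
    (hsmooth : ContDiffOn ℝ (⊤ : ℕ∞) (fun y : ℝ => f₁ (Complex.I * (y : ℂ))) (Set.Ioo (0 : ℝ) 1))
    (hL1 : IntegrableOn (fun y : ℝ => ‖f₁ (Complex.I / (y : ℂ))‖ / y) (Set.Ioi 1))
    (x t : ℝ) (ht : t ∈ Set.Ico (0 : ℝ) T) :
    deriv (fun x' => m1Seq x₀ T f₁ x' t 0) x =
      (1 / ((Real.pi : ℂ) * Complex.I)) *
        ((∫ y in Set.Ioi (1 : ℝ),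
          Real.exp (-(T - t) * y ^ 2 / 4) * Real.exp (-(t / (4 * y ^ 2))) * ((y + 1 / y) / 2) *
            (Complex.exp (-(((x - x₀ : ℝ) : ℂ) / 2) * (Complex.I * (y : ℂ))) *
              Complex.exp (-((x : ℂ) / 2) * (Complex.I / (y : ℂ))) *
              f₁ (Complex.I / (y : ℂ)) * (ω + ω ^ 2 / (y : ℂ) ^ 2)).re : ℝ) : ℂ) := by
  obtain ⟨ht0, htT⟩ := ht
  have hint := integrableOn_rayFreq_mul_rayDensity x₀ hsmooth.continuousOn hL1 ht0 htT x
  have hint_conj : IntegrableOn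
      (fun r => starRingEnd ℂ (rayFreq r * rayDensity x₀ T f₁ t x r)) (Set.Ioi 1) :=
    Complex.conjCLE.toContinuousLinearMap.integrable_comp hint
  have hderiv := hasDerivAt_rayIntegral x₀ hsmooth.continuousOn hL1 ht0 htT x
  have hm : (fun x' => m1Seq x₀ T f₁ x' t 0) =
      fun x' => rayIntegral x₀ T f₁ t x' - star (rayIntegral x₀ T f₁ t x') :=
    funext fun x' => m1Seq_zero_eq x₀ T f₁ x' t
  rw [hm, (hderiv.fun_sub hderiv.star).deriv, Complex.star_def, ← integral_conj,
    ← integral_sub hint hint_conj,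
    setIntegral_congr_fun measurableSet_Ioi fun r _ =>
      rayFreq_mul_rayDensity_sub_conj x₀ T f₁ t x r,
    integral_const_mul, integral_complex_ofReal]
  rfl

/-- The explicit formula for `∂ₓ m₁^{(1)}(x,t)` (the computation before Theorem 5.3). -/
theorem statement_12 (x₀ T M : ℝ) (hT : 0 < T) (hM : 2 ≤ M) (f₁ : ℂ → ℂ)
    (hsmooth : ContDiffOn ℝ (⊤ : ℕ∞) (fun y : ℝ => f₁ (Complex.I * (y : ℂ))) (Set.Ioo (0 : ℝ) 1))
    (hvanish : ∀ y ∈ Set.Icc (1 / 2 : ℝ) 1, f₁ (Complex.I * (y : ℂ)) = 0)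
    (hL1 : IntegrableOn (fun y : ℝ => ‖f₁ (Complex.I / (y : ℂ))‖ / y) (Set.Ioi 1))
    (hL1le : ∫ y in Set.Ioi (1 : ℝ), ‖f₁ (Complex.I / (y : ℂ))‖ / y ≤ 1 / M)
    (x t : ℝ) (ht : t ∈ Set.Ico (0 : ℝ) T) :
    deriv (fun x' => m1Seq x₀ T f₁ x' t 0) x =
      (1 / ((Real.pi : ℂ) * Complex.I)) *
        ((∫ y in Set.Ioi (1 : ℝ),
          Real.exp (-(T - t) * y ^ 2 / 4) * Real.exp (-(t / (4 * y ^ 2))) * ((y + 1 / y) / 2) *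
            (Complex.exp (-(((x - x₀ : ℝ) : ℂ) / 2) * (Complex.I * (y : ℂ))) *
              Complex.exp (-((x : ℂ) / 2) * (Complex.I / (y : ℂ))) *
              f₁ (Complex.I / (y : ℂ)) * (ω + ω ^ 2 / (y : ℂ) ^ 2)).re : ℝ) : ℂ) :=
  statement_12_general x₀ T f₁ hsmooth hL1 x t ht
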